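/- Let n ≥ 3 be odd, m = (n+1)/2, and θ, θ′ ∈ ℝ^n. For 0 ≤ k ≤ m−1 let Ā(θ)^{(k)} denote the (m−k)×(m−k) trailing principal submatrix of Ā(θ) obtained by deleting its first k rows and columns (and similarly for θ′). Assume: (i) θ_{2i} ≠ 0 for all 1 ≤ i ≤ (n−1)/2; (ii) for every 0 ≤ k ≤ m−1 and all (not necessarily distinct) eigenvalues λ, μ of Ā(θ)^{(k)} one has λ + μ ≠ 0, and the same holds for Ā(θ′)^{(k)}. If S is an invertible (n+1)×(n+1) real matrix with S e₁ = e₁, e_{m+1}ᵀ S = e_{m+1}ᵀ, and S A(θ) = A(θ′) S, then |θ_i| = |θ′_i| for every 1 ≤ i ≤ n. (Identifiability of the exchange model with transverse field when measuring Y₁ on the single-qubit probe.) -/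

import Mathlib

open Matrix

/-- For `n = 2m-1` (odd), the `m×m` symmetric tridiagonal matrix `Ā(θ)` with
`Ā_{i,i} = θ_{2i-1}` and `Ā_{i,i+1} = Ā_{i+1,i} = -θ_{2i}` (1-indexed). -/
def Abar (m : ℕ) (θ : Fin (2 * m - 1) → ℝ) : Matrix (Fin m) (Fin m) ℝ :=
  Matrix.of fun i j =>
    if i = j then θ ⟨2 * (i : ℕ), by have := i.isLt; omega⟩
    else if h : (i : ℕ) + 1 = (j : ℕ) then -θ ⟨2 * (i : ℕ) + 1, by have := j.isLt; omega⟩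
    else if h' : (j : ℕ) + 1 = (i : ℕ) then -θ ⟨2 * (j : ℕ) + 1, by have := i.isLt; omega⟩
    else 0

/-- The `(n+1)×(n+1)` block matrix `A(θ) = [[0, Ā(θ)], [-Ā(θ), 0]]` (with `n+1 = 2m`,
rows/columns indexed by `Fin m ⊕ Fin m`). -/
def Afull (m : ℕ) (θ : Fin (2 * m - 1) → ℝ) :
    Matrix (Fin m ⊕ Fin m) (Fin m ⊕ Fin m) ℝ :=
  Matrix.fromBlocks 0 (Abar m θ) (-(Abar m θ)) 0

/-- The `(m-k)×(m-k)` trailing principal submatrix obtained by deleting the first `k`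
rows and columns. -/
def trailing {m : ℕ} (k : ℕ) (M : Matrix (Fin m) (Fin m) ℝ) :
    Matrix (Fin (m - k)) (Fin (m - k)) ℝ :=
  Matrix.of fun i j =>
    M ⟨k + (i : ℕ), by have := i.isLt; omega⟩ ⟨k + (j : ℕ), by have := j.isLt; omega⟩

lemma myConjPow {m : ℕ} (U : Matrix (Fin m) (Fin m) ℝ)
    (hUs : U * star U = 1) (hsU : star U * U = 1)
    (C : Matrix (Fin m) (Fin m) ℝ) (d : Fin m → ℝ) (hC : C = U * diagonal d * star U) :
    ∀ n : ℕ, C ^ n = U * diagonal (fun i => d i ^ n) * star U := by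
  intro n
  induction n with
  | zero =>
      simp only [pow_zero]
      rw [show (diagonal (fun _ : Fin m => (1:ℝ))) = 1 from diagonal_one]
      rw [Matrix.mul_one, hUs]
  | succ n ih =>
      rw [pow_succ, ih, hC]
      simp only [Matrix.mul_assoc]
      rw [show star U * (U * (diagonal d * star U)) = (star U * U) * (diagonal d * star U) by
        simp [Matrix.mul_assoc], hsU, Matrix.one_mul]
      rw [← Matrix.mul_assoc (diagonal fun i => d i ^ n), diagonal_mul_diagonal]
      congr 2

lemma spec_rep {m : ℕ} (B : Matrix (Fin m) (Fin m) ℝ) (hB : B.IsHermitian) (j : Fin m) :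
    ∃ (lam w : Fin m → ℝ), (∀ i, 0 ≤ w i) ∧ (∀ i, lam i ∈ spectrum ℝ B) ∧
      ∀ n : ℕ, (B ^ n) j j = ∑ i, w i * lam i ^ n := by
  refine ⟨hB.eigenvalues, fun i => (hB.eigenvectorBasis i j)^2, fun i => sq_nonneg _,
    fun i => hB.eigenvalues_mem_spectrum_real i, fun n => ?_⟩
  have hUs : (hB.eigenvectorUnitary : Matrix (Fin m) (Fin m) ℝ) * star (hB.eigenvectorUnitary : Matrix (Fin m) (Fin m) ℝ) = 1 :=
    (Matrix.mem_unitaryGroup_iff).mp hB.eigenvectorUnitary.2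
  have hsU : star (hB.eigenvectorUnitary : Matrix (Fin m) (Fin m) ℝ) * (hB.eigenvectorUnitary : Matrix (Fin m) (Fin m) ℝ) = 1 :=
    (Matrix.mem_unitaryGroup_iff').mp hB.eigenvectorUnitary.2
  have hspec := hB.spectral_theorem
  simp only [RCLike.ofReal_real_eq_id, Function.comp] at hspec
  have key := myConjPow _ hUs hsU B hB.eigenvalues hspec n
  rw [key, Matrix.mul_apply]
  congr 1
  funext i
  rw [Matrix.mul_diagonal]
  have h2 : (hB.eigenvectorUnitary : Matrix (Fin m) (Fin m) ℝ) j i = hB.eigenvectorBasis i j :=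
    hB.eigenvectorUnitary_apply j i
  simp only [star_apply, h2, star_trivial]
  ring

lemma afull_sq (m : ℕ) (θ : Fin (2 * m - 1) → ℝ) :
    (Afull m θ) * (Afull m θ) =
      Matrix.fromBlocks (-((Abar m θ) ^ 2)) 0 0 (-((Abar m θ) ^ 2)) := by
  rw [Afull, Matrix.fromBlocks_multiply]
  simp [pow_two, Matrix.mul_neg, Matrix.neg_mul]

lemma afull_pow (m : ℕ) (θ : Fin (2 * m - 1) → ℝ) (k : ℕ) :
    (Afull m θ) ^ (2 * k + 1) =
      Matrix.fromBlocks 0 ((-1 : ℝ) ^ k • (Abar m θ) ^ (2 * k + 1))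
        ((-1 : ℝ) ^ (k + 1) • (Abar m θ) ^ (2 * k + 1)) 0 := by
  induction k with
  | zero =>
      simp [Afull, pow_one]
  | succ k ih =>
      have h2 : (Afull m θ) ^ (2 * (k+1) + 1)
          = (Afull m θ) ^ (2 * k + 1) * ((Afull m θ) * (Afull m θ)) := by
        rw [show 2 * (k+1) + 1 = (2*k+1) + 2 by ring, pow_add, pow_two]
      rw [h2, ih, afull_sq, Matrix.fromBlocks_multiply]
      have hB : ∀ (c : ℝ), (c • (Abar m θ) ^ (2*k+1)) * (-((Abar m θ)^2))
          = (-c) • (Abar m θ) ^ (2*(k+1)+1) := by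
        intro c
        rw [Matrix.mul_neg, Matrix.smul_mul, ← pow_add]
        rw [show 2*k+1+2 = 2*(k+1)+1 by ring]
        rw [← neg_smul]
      rw [hB, hB]
      simp [pow_succ, neg_smul, mul_neg_one]

section
variable {m : ℕ} (hm : 2 ≤ m)

lemma intertwine_pow {N : Type*} [Fintype N] [DecidableEq N]
    (S A A' : Matrix N N ℝ) (h : S * A = A' * S) (k : ℕ) :
    S * A ^ k = A' ^ k * S := by
  induction k with
  | zero => simp
  | succ k ih =>
      rw [pow_succ, pow_succ, ← Matrix.mul_assoc, ih, Matrix.mul_assoc, h, ← Matrix.mul_assoc]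

lemma entry_invariant {N : Type*} [Fintype N] [DecidableEq N]
    (S A A' : Matrix N N ℝ) (h : S * A = A' * S) (r c : N)
    (hSB : S.mulVec (Pi.single c 1) = Pi.single c 1)
    (hCS : Matrix.vecMul (Pi.single r 1) S = Pi.single r 1) (k : ℕ) :
    (A ^ k) r c = (A' ^ k) r c := by
  have h1 : Matrix.vecMul (Pi.single r 1) (S * A ^ k) ⬝ᵥ (Pi.single c 1)
      = (A ^ k) r c := by
    rw [← Matrix.vecMul_vecMul, hCS, Matrix.single_one_vecMul, dotProduct_single]
    simp
  have h2 : Matrix.vecMul (Pi.single r 1) (A' ^ k * S) ⬝ᵥ (Pi.single c 1)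
      = (A' ^ k) r c := by
    rw [← Matrix.vecMul_vecMul, ← Matrix.dotProduct_mulVec, hSB, Matrix.single_one_vecMul,
      dotProduct_single]
    simp
  rw [← h1, ← h2, intertwine_pow S A A' h]
end

lemma odd_moments (m : ℕ) (hm : 1 < m) (θ θ' : Fin (2 * m - 1) → ℝ)
    (S : Matrix (Fin m ⊕ Fin m) (Fin m ⊕ Fin m) ℝ)
    (hSB : S.mulVec (Pi.single (Sum.inl ⟨0, by omega⟩) 1)
      = Pi.single (Sum.inl ⟨0, by omega⟩) 1)
    (hCS : Matrix.vecMul (Pi.single (Sum.inr ⟨0, by omega⟩) 1) S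
      = Pi.single (Sum.inr ⟨0, by omega⟩) 1)
    (hSA : S * Afull m θ = Afull m θ' * S) (k : ℕ) :
    ((Abar m θ) ^ (2*k+1)) ⟨0, by omega⟩ ⟨0, by omega⟩
      = ((Abar m θ') ^ (2*k+1)) ⟨0, by omega⟩ ⟨0, by omega⟩ := by
  have h := entry_invariant S (Afull m θ) (Afull m θ') hSA
    (Sum.inr ⟨0, by omega⟩) (Sum.inl ⟨0, by omega⟩) hSB hCS (2*k+1)
  rw [afull_pow, afull_pow] at h
  simp only [Matrix.fromBlocks_apply₂₁, Matrix.smul_apply, smul_eq_mul] at h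
  have hne : ((-1:ℝ)^(k+1)) ≠ 0 := by positivity
  exact mul_left_cancel₀ hne h


lemma poly_odd_side {m : ℕ} (lam w : Fin m → ℝ) (p : Polynomial ℝ) :
    ∑ i, w i * lam i * p.eval (lam i ^ 2)
      = ∑ k ∈ Finset.range (p.natDegree + 1), p.coeff k * ∑ i, w i * lam i ^ (2*k+1) := by
  calc ∑ i, w i * lam i * p.eval (lam i ^ 2)
      = ∑ i, ∑ k ∈ Finset.range (p.natDegree + 1), p.coeff k * (w i * lam i ^ (2*k+1)) := by
        refine Finset.sum_congr rfl fun i _ => ?_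
        rw [Polynomial.eval_eq_sum_range, Finset.mul_sum]
        refine Finset.sum_congr rfl fun k _ => ?_
        ring
    _ = _ := by
        rw [Finset.sum_comm]
        simp_rw [Finset.mul_sum]

lemma all_moments {m : ℕ} (lam w lam' w' : Fin m → ℝ)
    (hw : ∀ i, 0 ≤ w i) (hw' : ∀ i, 0 ≤ w' i)
    (hlam : ∀ i j, lam i + lam j ≠ 0)
    (hlam' : ∀ i j, lam' i + lam' j ≠ 0)
    (hodd : ∀ k : ℕ, ∑ i, w i * lam i ^ (2*k+1) = ∑ i, w' i * lam' i ^ (2*k+1)) :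
    ∀ n : ℕ, ∑ i, w i * lam i ^ n = ∑ i, w' i * lam' i ^ n := by
  classical
  -- polynomial version of odd moment equality
  have hpoly : ∀ p : Polynomial ℝ,
      ∑ i, w i * lam i * p.eval (lam i ^ 2) = ∑ i, w' i * lam' i * p.eval (lam' i ^ 2) := by
    intro p
    rw [poly_odd_side, poly_odd_side]
    exact Finset.sum_congr rfl fun k _ => by rw [hodd k]
  -- atom equality on squares
  have hatom : ∀ t : ℝ,
      ∑ i ∈ Finset.univ.filter (fun i => lam i ^ 2 = t), w i * lam i
        = ∑ i ∈ Finset.univ.filter (fun i => lam' i ^ 2 = t), w' i * lam' i := by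
    intro t
    set s : Finset ℝ := (Finset.univ.image (fun i => lam i ^ 2)) ∪
      (Finset.univ.image (fun i => lam' i ^ 2)) with hs
    by_cases ht : t ∈ s
    · have hinj : Set.InjOn (id : ℝ → ℝ) s := Function.injective_id.injOn
      have key := hpoly (Lagrange.basis s id t)
      have heval : ∀ x : ℝ, x ∈ s → (Lagrange.basis s id t).eval x
          = if x = t then 1 else 0 := by
        intro x hx
        by_cases hxt : x = t
        · subst hxt; simpa using Lagrange.eval_basis_self hinj ht
        · simp only [hxt, if_false]
          simpa using Lagrange.eval_basis_of_ne (v := (id : ℝ → ℝ)) (i := t) (j := x)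
            (fun h => hxt h.symm) hx
      have hside : ∀ (lam w : Fin m → ℝ),
          (∀ i : Fin m, lam i ^ 2 ∈ s) →
          ∑ i, w i * lam i * (Lagrange.basis s id t).eval (lam i ^ 2)
            = ∑ i ∈ Finset.univ.filter (fun i => lam i ^ 2 = t), w i * lam i := by
        intro lam w hmem
        rw [Finset.sum_filter]
        refine Finset.sum_congr rfl fun i _ => ?_
        rw [heval _ (hmem i)]
        by_cases h : lam i ^ 2 = t <;> simp [h]
      rw [hside lam w (fun i => Finset.mem_union_left _ (Finset.mem_image_of_mem _ (Finset.mem_univ i))),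
        hside lam' w' (fun i => Finset.mem_union_right _ (Finset.mem_image_of_mem _ (Finset.mem_univ i)))] at key
      exact key
    · have h1 : Finset.univ.filter (fun i => lam i ^ 2 = t) = ∅ := by
        refine Finset.filter_eq_empty_iff.mpr fun i _ => fun h => ht ?_
        exact h ▸ Finset.mem_union_left _ (Finset.mem_image_of_mem _ (Finset.mem_univ i))
      have h2 : Finset.univ.filter (fun i => lam' i ^ 2 = t) = ∅ := by
        refine Finset.filter_eq_empty_iff.mpr fun i _ => fun h => ht ?_
        exact h ▸ Finset.mem_union_right _ (Finset.mem_image_of_mem _ (Finset.mem_univ i))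
      rw [h1, h2]
      simp
  -- group weights
  set H : ℝ → ℝ := fun t => ∑ i ∈ Finset.univ.filter (fun i => lam i = t), w i with hH
  set H' : ℝ → ℝ := fun t => ∑ i ∈ Finset.univ.filter (fun i => lam' i = t), w' i with hH'
  have hHnn : ∀ t, 0 ≤ H t := fun t => Finset.sum_nonneg fun i _ => hw i
  have hH'nn : ∀ t, 0 ≤ H' t := fun t => Finset.sum_nonneg fun i _ => hw' i
  have hHex : ∀ t, H t ≠ 0 → ∃ i, lam i = t := by
    intro t h
    by_contra hc
    push_neg at hc
    apply h
    rw [hH]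
    refine Finset.sum_eq_zero fun i hi => ?_
    exact absurd (Finset.mem_filter.mp hi).2 (hc i)
  have hH'ex : ∀ t, H' t ≠ 0 → ∃ i, lam' i = t := by
    intro t h
    by_contra hc
    push_neg at hc
    apply h
    refine Finset.sum_eq_zero fun i hi => ?_
    exact absurd (Finset.mem_filter.mp hi).2 (hc i)
  have hHalt : ∀ t : ℝ, H t = 0 ∨ H (-t) = 0 := by
    intro t
    by_contra hc
    push_neg at hc
    obtain ⟨i, hi⟩ := hHex t hc.1
    obtain ⟨j, hj⟩ := hHex (-t) hc.2
    exact hlam i j (by rw [hi, hj]; ring)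
  have hH'alt : ∀ t : ℝ, H' t = 0 ∨ H' (-t) = 0 := by
    intro t
    by_contra hc
    push_neg at hc
    obtain ⟨i, hi⟩ := hH'ex t hc.1
    obtain ⟨j, hj⟩ := hH'ex (-t) hc.2
    exact hlam' i j (by rw [hi, hj]; ring)
  -- split the square filter
  have hsplit : ∀ (lam w : Fin m → ℝ), (∀ t : ℝ, t ≠ 0 →
      ∑ i ∈ Finset.univ.filter (fun i => lam i ^ 2 = t ^ 2), w i * lam i
        = t * (∑ i ∈ Finset.univ.filter (fun i => lam i = t), w i)
          - t * (∑ i ∈ Finset.univ.filter (fun i => lam i = -t), w i)) := by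
    intro lam w t ht
    have hiff : ∀ x : ℝ, x ^ 2 = t ^ 2 ↔ (x = t ∨ x = -t) := by
      intro x
      constructor
      · intro h
        rcases sq_eq_sq_iff_eq_or_eq_neg.mp h with h | h
        · exact Or.inl h
        · exact Or.inr h
      · rintro (h | h) <;> rw [h] <;> ring
    have hfil : Finset.univ.filter (fun i => lam i ^ 2 = t ^ 2)
        = Finset.univ.filter (fun i => lam i = t) ∪ Finset.univ.filter (fun i => lam i = -t) := by
      rw [← Finset.filter_or]
      exact Finset.filter_congr fun i _ => by rw [hiff]
    have hdisj : Disjoint (Finset.univ.filter (fun i => lam i = t))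
        (Finset.univ.filter (fun i => lam i = -t)) := by
      refine Finset.disjoint_left.mpr fun i hi hj => ?_
      have h1 := (Finset.mem_filter.mp hi).2
      have h2 := (Finset.mem_filter.mp hj).2
      exact ht (by rw [h1] at h2; linarith)
    rw [hfil, Finset.sum_union hdisj]
    have e1 : ∑ i ∈ Finset.univ.filter (fun i => lam i = t), w i * lam i
        = t * ∑ i ∈ Finset.univ.filter (fun i => lam i = t), w i := by
      rw [Finset.mul_sum]
      refine Finset.sum_congr rfl fun i hi => ?_
      rw [(Finset.mem_filter.mp hi).2]; ring
    have e2 : ∑ i ∈ Finset.univ.filter (fun i => lam i = -t), w i * lam i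
        = -(t * ∑ i ∈ Finset.univ.filter (fun i => lam i = -t), w i) := by
      rw [Finset.mul_sum, ← Finset.sum_neg_distrib]
      refine Finset.sum_congr rfl fun i hi => ?_
      rw [(Finset.mem_filter.mp hi).2]; ring
    rw [e1, e2]; ring
  -- H = H'
  have hHeq : ∀ t : ℝ, H t = H' t := by
    intro t
    by_cases ht : t = 0
    · subst ht
      have z1 : H 0 = 0 := by
        refine Finset.sum_eq_zero fun i hi => ?_
        exfalso
        exact hlam i i (by rw [(Finset.mem_filter.mp hi).2]; ring)
      have z2 : H' 0 = 0 := by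
        refine Finset.sum_eq_zero fun i hi => ?_
        exfalso
        exact hlam' i i (by rw [(Finset.mem_filter.mp hi).2]; ring)
      rw [z1, z2]
    · have h := hatom (t^2)
      rw [hsplit lam w t ht, hsplit lam' w' t ht] at h
      have hd : H t - H (-t) = H' t - H' (-t) := by
        have := mul_left_cancel₀ ht (by linarith : t * (H t - H (-t)) = t * (H' t - H' (-t)))
        linarith [this]
      have n1 := hHnn t; have n2 := hHnn (-t); have n3 := hH'nn t; have n4 := hH'nn (-t)
      rcases hHalt t with h0 | h0 <;> rcases hH'alt t with h0' | h0' <;> linarith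
  -- conclude
  intro n
  set s' : Finset ℝ := (Finset.univ.image lam) ∪ (Finset.univ.image lam') with hs'
  have fib : ∀ (lam w : Fin m → ℝ), (∀ i : Fin m, lam i ∈ s') →
      ∑ i, w i * lam i ^ n
        = ∑ t ∈ s', (∑ i ∈ Finset.univ.filter (fun i => lam i = t), w i) * t ^ n := by
    intro lam w hmem
    rw [← Finset.sum_fiberwise_of_maps_to (fun i _ => hmem i) (fun i => w i * lam i ^ n)]
    refine Finset.sum_congr rfl fun t _ => ?_
    rw [Finset.sum_mul]
    refine Finset.sum_congr rfl fun i hi => ?_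
    rw [(Finset.mem_filter.mp hi).2]
  rw [fib lam w (fun i => Finset.mem_union_left _ (Finset.mem_image_of_mem _ (Finset.mem_univ i))),
    fib lam' w' (fun i => Finset.mem_union_right _ (Finset.mem_image_of_mem _ (Finset.mem_univ i)))]
  exact Finset.sum_congr rfl fun t _ => by rw [show (∑ i ∈ Finset.univ.filter (fun i => lam i = t), w i) = H t from rfl, hHeq t]

lemma trailing_zero {m : ℕ} (M : Matrix (Fin m) (Fin m) ℝ) : trailing 0 M = M := by
  ext i j
  show M ⟨0 + (i : ℕ), _⟩ ⟨0 + (j : ℕ), _⟩ = M i j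
  congr 1 <;> exact Fin.ext (by simp)

lemma abar_isHermitian (m : ℕ) (θ : Fin (2 * m - 1) → ℝ) : (Abar m θ).IsHermitian := by
  rw [Matrix.IsHermitian, Matrix.conjTranspose]
  ext i j
  simp only [Matrix.map_apply, Matrix.transpose_apply, star_trivial]
  rw [Abar]
  simp only [Matrix.of_apply]
  by_cases h : i = j
  · subst h; simp
  · have h' : ¬ j = i := fun hh => h hh.symm
    simp only [h, h', if_false]
    by_cases h1 : (j : ℕ) + 1 = (i : ℕ)
    · have h2 : ¬ (i : ℕ) + 1 = (j : ℕ) := by omega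
      simp [h1, h2]
    · by_cases h2 : (i : ℕ) + 1 = (j : ℕ) <;> simp [h1, h2]

lemma jacobi_unique {m : ℕ} (hm0 : 0 < m) (B B' : Matrix (Fin m) (Fin m) ℝ)
    (hsym : Bᵀ = B) (hsym' : B'ᵀ = B')
    (hB0 : ∀ i j : Fin m, (j:ℕ) + 1 < (i:ℕ) → B i j = 0)
    (hB'0 : ∀ i j : Fin m, (j:ℕ) + 1 < (i:ℕ) → B' i j = 0)
    (hBsub : ∀ (j : ℕ) (h : j + 1 < m), B ⟨j+1, h⟩ ⟨j, by omega⟩ ≠ 0)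
    (hmom : ∀ n : ℕ, (B ^ n) ⟨0, hm0⟩ ⟨0, hm0⟩ = (B' ^ n) ⟨0, hm0⟩ ⟨0, hm0⟩) :
    ∃ ε : Fin m → ℝ, (∀ i, ε i ^ 2 = 1) ∧ ∀ i j, B' i j = ε i * ε j * B i j := by
  set z : Fin m := ⟨0, hm0⟩ with hz
  set u : ℕ → Fin m → ℝ := fun k j => (B ^ k) j z with hu
  set u' : ℕ → Fin m → ℝ := fun k j => (B' ^ k) j z with hu'
  -- step recurrences
  have ustep : ∀ (k : ℕ) (j : Fin m), u (k+1) j = ∑ l, B j l * u k l := by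
    intro k j
    show (B ^ (k+1)) j z = _
    rw [pow_succ']
    rw [Matrix.mul_apply]
  have ustep' : ∀ (k : ℕ) (j : Fin m), u' (k+1) j = ∑ l, B' j l * u' k l := by
    intro k j
    show (B' ^ (k+1)) j z = _
    rw [pow_succ']
    rw [Matrix.mul_apply]
  -- triangularity
  have utri : ∀ (k : ℕ) (j : Fin m), k < (j:ℕ) → u k j = 0 := by
    intro k
    induction k with
    | zero =>
        intro j hj
        show (B ^ 0) j z = 0
        rw [pow_zero]
        exact Matrix.one_apply_ne (fun h => by rw [h] at hj; simp [hz] at hj)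
    | succ k ih =>
        intro j hj
        rw [ustep]
        refine Finset.sum_eq_zero fun l _ => ?_
        by_cases hl : (l:ℕ) + 1 < (j:ℕ)
        · rw [hB0 j l hl, zero_mul]
        · rw [ih l (by omega), mul_zero]
  have utri' : ∀ (k : ℕ) (j : Fin m), k < (j:ℕ) → u' k j = 0 := by
    intro k
    induction k with
    | zero =>
        intro j hj
        show (B' ^ 0) j z = 0
        rw [pow_zero]
        exact Matrix.one_apply_ne (fun h => by rw [h] at hj; simp [hz] at hj)
    | succ k ih =>
        intro j hj
        rw [ustep']
        refine Finset.sum_eq_zero fun l _ => ?_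
        by_cases hl : (l:ℕ) + 1 < (j:ℕ)
        · rw [hB'0 j l hl, zero_mul]
        · rw [ih l (by omega), mul_zero]
  -- pivots
  have upiv : ∀ (k : ℕ) (hk : k < m), u k ⟨k, hk⟩ ≠ 0 := by
    intro k
    induction k with
    | zero =>
        intro hk
        show (B ^ 0) ⟨0, hk⟩ z ≠ 0
        rw [pow_zero, hz]
        rw [show ((⟨0, hk⟩ : Fin m) = ⟨0, hm0⟩) from rfl]
        simp
    | succ k ih =>
        intro hk
        have hkm : k < m := by omega
        rw [ustep]
        rw [Finset.sum_eq_single ⟨k, hkm⟩]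
        · exact mul_ne_zero (hBsub k hk) (ih hkm)
        · intro l _ hl
          rcases lt_trichotomy (l:ℕ) k with h | h | h
          · rw [hB0 _ _ (by simp; omega), zero_mul]
          · exact absurd (Fin.ext h) hl
          · rw [utri k l h, mul_zero]
        · intro h
          exact absurd (Finset.mem_univ _) h
  -- gram identities
  have powsym : ∀ (a : ℕ) (i j : Fin m), (B ^ a) i j = (B ^ a) j i := by
    intro a i j
    have h : (B ^ a)ᵀ = B ^ a := by rw [Matrix.transpose_pow, hsym]
    conv_lhs => rw [← h]
    rfl
  have powsym' : ∀ (a : ℕ) (i j : Fin m), (B' ^ a) i j = (B' ^ a) j i := by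
    intro a i j
    have h : (B' ^ a)ᵀ = B' ^ a := by rw [Matrix.transpose_pow, hsym']
    conv_lhs => rw [← h]
    rfl
  have gram : ∀ a b : ℕ, ∑ j, u a j * u b j = (B ^ (a+b)) z z := by
    intro a b
    rw [pow_add, Matrix.mul_apply]
    refine Finset.sum_congr rfl fun j _ => ?_
    rw [hu]
    simp only
    rw [powsym a z j]
  have gram' : ∀ a b : ℕ, ∑ j, u' a j * u' b j = (B' ^ (a+b)) z z := by
    intro a b
    rw [pow_add, Matrix.mul_apply]
    refine Finset.sum_congr rfl fun j _ => ?_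
    rw [hu']
    simp only
    rw [powsym' a z j]
  have gramEq : ∀ a b : ℕ, ∑ j, u' a j * u' b j = ∑ j, u a j * u b j := by
    intro a b
    rw [gram, gram', hmom]
  -- vanishing lemma
  have dvanish : ∀ (d : Fin m → ℝ) (k : ℕ), k ≤ m →
      (∀ i : Fin m, (i:ℕ) < k → ∑ j, d j * u (i:ℕ) j = 0) →
      ∀ j : Fin m, (j:ℕ) < k → d j = 0 := by
    intro d k hkm hsys
    have key : ∀ jv : ℕ, ∀ (hjv : jv < m), jv < k → d ⟨jv, hjv⟩ = 0 := by
      intro jv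
      induction jv using Nat.strong_induction_on with
      | _ jv IH =>
          intro hjv hj
          have h := hsys ⟨jv, hjv⟩ hj
          rw [Finset.sum_eq_single ⟨jv, hjv⟩] at h
          · exact (mul_eq_zero.mp h).resolve_right (upiv jv hjv)
          · intro l _ hl
            rcases lt_trichotomy (l:ℕ) jv with hc | hc | hc
            · have hl0 : d l = 0 := by
                have := IH (l:ℕ) hc l.isLt (by omega)
                simpa using this
              rw [hl0, zero_mul]
            · exact absurd (Fin.ext hc) hl
            · rw [utri jv l hc, mul_zero]
          · intro hn
            exact absurd (Finset.mem_univ _) hn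
    intro j hj
    have := key (j:ℕ) j.isLt hj
    simpa using this
  -- the sign sequence
  set ε : Fin m → ℝ := fun j => u' (j:ℕ) j / u (j:ℕ) j with hε
  -- main induction
  have main : ∀ k : ℕ, ∀ hk : k < m, (∀ j : Fin m, u' k j = ε j * u k j) ∧ ε ⟨k, hk⟩ ^ 2 = 1 := by
    intro k
    induction k using Nat.strong_induction_on with
    | _ k IH =>
        intro hk
        -- step A : agreement below k
        have hbelow : ∀ j : Fin m, (j:ℕ) < k → ε j * u' k j = u k j := by
          have hsys : ∀ i : Fin m, (i:ℕ) < k →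
              ∑ j, (ε j * u' k j - u k j) * u (i:ℕ) j = 0 := by
            intro i hi
            have hui : ∀ j : Fin m, u' (i:ℕ) j = ε j * u (i:ℕ) j :=
              (IH (i:ℕ) hi i.isLt).1
            have e1 : ∑ j, (ε j * u' k j - u k j) * u (i:ℕ) j
                = (∑ j, u' k j * u' (i:ℕ) j) - ∑ j, u k j * u (i:ℕ) j := by
              rw [← Finset.sum_sub_distrib]
              refine Finset.sum_congr rfl fun j _ => ?_
              rw [hui j]
              ring
            rw [e1, gramEq]
            ring
          exact fun j hj => sub_eq_zero.mp (dvanish _ k (le_of_lt hk) hsys j hj)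
        have hbelow' : ∀ j : Fin m, (j:ℕ) < k → u' k j = ε j * u k j := by
          intro j hj
          have hsq : ε j ^ 2 = 1 := by
            have := (IH (j:ℕ) hj j.isLt).2
            simpa using this
          have := hbelow j hj
          calc u' k j = ε j ^ 2 * u' k j := by rw [hsq]; ring
            _ = ε j * (ε j * u' k j) := by ring
            _ = ε j * u k j := by rw [this]
        -- step B : pivot
        have hpivsq : u' k ⟨k, hk⟩ * u' k ⟨k, hk⟩ = u k ⟨k, hk⟩ * u k ⟨k, hk⟩ := by
          have hnorm : ∑ j, (u' k j * u' k j - u k j * u k j) = 0 := by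
            rw [Finset.sum_sub_distrib, gramEq]
            ring
          rw [Finset.sum_eq_single (⟨k, hk⟩ : Fin m)] at hnorm
          · linarith [hnorm]
          · intro l _ hl
            rcases lt_trichotomy (l:ℕ) k with hc | hc | hc
            · have h1 := hbelow' l hc
              have hsq : ε l ^ 2 = 1 := by
                have := (IH (l:ℕ) hc l.isLt).2
                simpa using this
              rw [h1]
              have : ε l * u k l * (ε l * u k l) = ε l ^ 2 * (u k l * u k l) := by ring
              rw [this, hsq]
              ring
            · exact absurd (Fin.ext hc) hl
            · rw [utri k l hc, utri' k l hc]
              ring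
          · intro hn
            exact absurd (Finset.mem_univ _) hn
        have hupk : u k ⟨k, hk⟩ ≠ 0 := upiv k hk
        have hεk : ε ⟨k, hk⟩ = u' k ⟨k, hk⟩ / u k ⟨k, hk⟩ := rfl
        have hεsq : ε ⟨k, hk⟩ ^ 2 = 1 := by
          rw [hεk, div_pow, pow_two, pow_two, hpivsq]
          exact div_self (mul_ne_zero hupk hupk)
        refine ⟨fun j => ?_, by simpa using hεsq⟩
        rcases lt_trichotomy (j:ℕ) k with hc | hc | hc
        · exact hbelow' j hc
        · have hj : j = ⟨k, hk⟩ := Fin.ext hc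
          subst hj
          rw [hεk, div_mul_cancel₀ _ hupk]
        · rw [utri k j hc, utri' k j hc, mul_zero]
  have hεsq : ∀ j : Fin m, ε j ^ 2 = 1 := by
    intro j
    have := (main (j:ℕ) j.isLt).2
    simpa using this
  have hεne : ∀ j : Fin m, ε j ≠ 0 := by
    intro j h
    have := hεsq j
    rw [h] at this
    norm_num at this
  -- extension to k = m
  have uext : ∀ (k : ℕ), k ≤ m → ∀ j : Fin m, u' k j = ε j * u k j := by
    intro k hkm
    rcases lt_or_eq_of_le hkm with h | h
    · exact (main k h).1
    · have hsys : ∀ i : Fin m, (i:ℕ) < m →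
          ∑ j, (ε j * u' k j - u k j) * u (i:ℕ) j = 0 := by
        intro i _
        have hui : ∀ j : Fin m, u' (i:ℕ) j = ε j * u (i:ℕ) j := (main (i:ℕ) i.isLt).1
        have e1 : ∑ j, (ε j * u' k j - u k j) * u (i:ℕ) j
            = (∑ j, u' k j * u' (i:ℕ) j) - ∑ j, u k j * u (i:ℕ) j := by
          rw [← Finset.sum_sub_distrib]
          refine Finset.sum_congr rfl fun j _ => ?_
          rw [hui j]
          ring
        rw [e1, gramEq]
        ring
      intro j
      have hd := dvanish (fun j => ε j * u' k j - u k j) m (le_refl m) hsys j j.isLt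
      have hsq := hεsq j
      calc u' k j = ε j ^ 2 * u' k j := by rw [hsq]; ring
        _ = ε j * (ε j * u' k j) := by ring
        _ = ε j * u k j := by
            have h0 : ε j * u' k j - u k j = 0 := hd
            rw [show ε j * u' k j = u k j by linarith]
  -- matrix-level conclusion
  set E : Matrix (Fin m) (Fin m) ℝ := Matrix.diagonal ε with hE
  set P : Matrix (Fin m) (Fin m) ℝ := Matrix.of (fun j k => u (k:ℕ) j) with hP
  have hPdet : IsUnit P.det := by
    have hPtri : P.BlockTriangular id := by
      intro i j hij
      show u (j:ℕ) i = 0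
      exact utri (j:ℕ) i hij
    rw [Matrix.det_of_upperTriangular hPtri]
    have : ∀ k : Fin m, P k k ≠ 0 := fun k => upiv (k:ℕ) k.isLt
    exact (Finset.prod_ne_zero_iff.mpr (fun k _ => this k)).isUnit
  have key : B' * E * P = E * B * P := by
    ext j k
    have lhs : (B' * E * P) j k = u' ((k:ℕ)+1) j := by
      rw [Matrix.mul_assoc, Matrix.mul_apply, ustep']
      refine Finset.sum_congr rfl fun l _ => ?_
      congr 1
      have hEP : (E * P) l k = ε l * u (k:ℕ) l := by
        rw [hE, Matrix.diagonal_mul]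
        rfl
      rw [hEP]
      exact (uext (k:ℕ) (le_of_lt k.isLt) l).symm
    have rhs : (E * B * P) j k = ε j * u ((k:ℕ)+1) j := by
      have h1 : (E * B * P) j k = ∑ l, (E * B) j l * u (k:ℕ) l := by
        rw [Matrix.mul_apply]
        rfl
      have h2 : ∀ l, (E * B) j l = ε j * B j l := fun l => by rw [hE, Matrix.diagonal_mul]
      rw [h1]
      calc ∑ l, (E * B) j l * u (k:ℕ) l = ε j * ∑ l, B j l * u (k:ℕ) l := by
            rw [Finset.mul_sum]
            refine Finset.sum_congr rfl fun l _ => ?_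
            rw [h2 l]
            ring
        _ = ε j * u ((k:ℕ)+1) j := by rw [← ustep]
    rw [lhs, rhs]
    exact uext ((k:ℕ)+1) k.isLt j
  have hBE : B' * E = E * B := by
    have := congrArg (fun M => M * P⁻¹) key
    simpa [Matrix.mul_nonsing_inv_cancel_right _ _ hPdet] using this
  have hfin : B' = E * B * E := by
    have hEE : E * E = 1 := by
      rw [hE, Matrix.diagonal_mul_diagonal]
      rw [show (fun i => ε i * ε i) = fun _ => (1:ℝ) from funext fun i => by
        have := hεsq i; nlinarith [hεsq i]]
      exact Matrix.diagonal_one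
    calc B' = B' * (E * E) := by rw [hEE, Matrix.mul_one]
      _ = (B' * E) * E := by rw [Matrix.mul_assoc]
      _ = E * B * E := by rw [hBE]
  refine ⟨ε, hεsq, fun i j => ?_⟩
  rw [hfin, hE, Matrix.mul_diagonal, Matrix.diagonal_mul]
  ring


set_option maxHeartbeats 1000000 in
/-- Identifiability of the exchange model with transverse field when measuring `Y₁` on
the single qubit probe: under the genericity assumptions (i) `θ_{2i} ≠ 0` and (ii) no two
eigenvalues of any trailing principal submatrix of `Ā(θ)` or `Ā(θ')` sum to zero, any
invertible `S` with `S e₁ = e₁`, `e_{m+1}ᵀ S = e_{m+1}ᵀ` and `S A(θ) = A(θ') S` forces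
`|θᵢ| = |θ'ᵢ|` for all `i`. -/
theorem stmt6 (m : ℕ) (hm : 2 ≤ m) (θ θ' : Fin (2 * m - 1) → ℝ)
    (hθeven : ∀ (i : ℕ) (h : i < m - 1), θ ⟨2 * i + 1, by omega⟩ ≠ 0)
    (hspec : ∀ k : ℕ, k ≤ m - 1 →
      (∀ lam ∈ spectrum ℝ (trailing k (Abar m θ)),
        ∀ mu ∈ spectrum ℝ (trailing k (Abar m θ)), lam + mu ≠ 0) ∧
      (∀ lam ∈ spectrum ℝ (trailing k (Abar m θ')),
        ∀ mu ∈ spectrum ℝ (trailing k (Abar m θ')), lam + mu ≠ 0))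
    (S : Matrix (Fin m ⊕ Fin m) (Fin m ⊕ Fin m) ℝ) (hS : IsUnit S)
    (hSB : S.mulVec (Pi.single (Sum.inl ⟨0, by omega⟩) 1)
      = Pi.single (Sum.inl ⟨0, by omega⟩) 1)
    (hCS : Matrix.vecMul (Pi.single (Sum.inr ⟨0, by omega⟩) 1) S
      = Pi.single (Sum.inr ⟨0, by omega⟩) 1)
    (hSA : S * Afull m θ = Afull m θ' * S) :
    ∀ i : Fin (2 * m - 1), |θ i| = |θ' i| := by
  classical
  set z : Fin m := ⟨0, by omega⟩ with hzdef
  have hm0 : 0 < m := by omega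
  -- symmetry
  have hsym : (Abar m θ)ᵀ = Abar m θ := by
    have h := abar_isHermitian m θ
    ext i j
    have := congrFun (congrFun h i) j
    simpa [Matrix.conjTranspose_apply] using this
  have hsym' : (Abar m θ')ᵀ = Abar m θ' := by
    have h := abar_isHermitian m θ'
    ext i j
    have := congrFun (congrFun h i) j
    simpa [Matrix.conjTranspose_apply] using this
  -- structure
  have habar0 : ∀ (ϑ : Fin (2*m-1) → ℝ) (i j : Fin m), (j:ℕ) + 1 < (i:ℕ) → Abar m ϑ i j = 0 := by
    intro ϑ i j h
    show (if i = j then _ else if _ : (i:ℕ)+1 = (j:ℕ) then _ else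
      if _ : (j:ℕ)+1 = (i:ℕ) then _ else (0:ℝ)) = 0
    rw [if_neg (fun e => by rw [e] at h; omega), dif_neg (by omega), dif_neg (by omega)]
  have habarsub : ∀ (ϑ : Fin (2*m-1) → ℝ) (j : ℕ) (h : j + 1 < m),
      Abar m ϑ ⟨j+1, h⟩ ⟨j, by omega⟩ = -ϑ ⟨2*j+1, by omega⟩ := by
    intro ϑ j h
    show (if _ then _ else if _ : (j:ℕ)+1+1 = j then _ else if _ : (j:ℕ)+1 = j+1 then
      -ϑ ⟨2*j+1, _⟩ else (0:ℝ)) = _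
    rw [if_neg (fun e => by have := congrArg Fin.val e; simp at this), dif_neg (by omega),
      dif_pos rfl]
  have habardiag : ∀ (ϑ : Fin (2*m-1) → ℝ) (l : ℕ) (h : l < m),
      Abar m ϑ ⟨l, h⟩ ⟨l, h⟩ = ϑ ⟨2*l, by omega⟩ := by
    intro ϑ l h
    show (if _ then ϑ ⟨2*l, _⟩ else _) = _
    rw [if_pos rfl]
  -- odd moments
  have hodd : ∀ k : ℕ, ((Abar m θ) ^ (2*k+1)) z z = ((Abar m θ') ^ (2*k+1)) z z :=
    fun k => odd_moments m hm θ θ' S hSB hCS hSA k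
  -- spectral representations
  obtain ⟨lam, w, hw, hls, hrep⟩ := spec_rep (Abar m θ) (abar_isHermitian m θ) z
  obtain ⟨lam', w', hw', hls', hrep'⟩ := spec_rep (Abar m θ') (abar_isHermitian m θ') z
  -- spectrum conditions
  have hsp := hspec 0 (by omega)
  rw [trailing_zero, trailing_zero] at hsp
  have hlam : ∀ i j, lam i + lam j ≠ 0 := fun i j => hsp.1 _ (hls i) _ (hls j)
  have hlam' : ∀ i j, lam' i + lam' j ≠ 0 := fun i j => hsp.2 _ (hls' i) _ (hls' j)
  -- all moments
  have hmomsum := all_moments lam w lam' w' hw hw' hlam hlam'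
    (fun k => by rw [← hrep, ← hrep', hodd k])
  have hmom : ∀ n : ℕ, ((Abar m θ) ^ n) z z = ((Abar m θ') ^ n) z z := fun n => by
    rw [hrep, hrep', hmomsum n]
  -- Jacobi uniqueness
  obtain ⟨ε, hεsq, hεrel⟩ := jacobi_unique hm0 (Abar m θ) (Abar m θ') hsym hsym'
    (habar0 θ) (habar0 θ') (fun j h => by
      rw [habarsub θ j h]
      simpa using hθeven j (by omega)) hmom
  have hεabs : ∀ x : Fin m, |ε x| = 1 := by
    intro x
    rcases mul_self_eq_one_iff.mp (show ε x * ε x = 1 by rw [← pow_two]; exact hεsq x) with h | h <;>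
      rw [h] <;> norm_num
  -- conclude
  intro i
  rcases Nat.even_or_odd (i:ℕ) with ⟨l, hl⟩ | ⟨l, hl⟩
  · -- diagonal entry
    have hlm : l < m := by have := i.isLt; omega
    have hieq : i = ⟨2*l, by have := i.isLt; omega⟩ := Fin.ext (by simp; omega)
    have h1 : (Abar m θ) ⟨l, hlm⟩ ⟨l, hlm⟩ = θ i := by rw [hieq]; exact habardiag θ l hlm
    have h2 : (Abar m θ') ⟨l, hlm⟩ ⟨l, hlm⟩ = θ' i := by rw [hieq]; exact habardiag θ' l hlm
    have h3 := hεrel ⟨l, hlm⟩ ⟨l, hlm⟩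
    rw [h1, h2] at h3
    rw [h3, show ε ⟨l, hlm⟩ * ε ⟨l, hlm⟩ = 1 from by rw [← pow_two]; exact hεsq _, one_mul]
  · -- off-diagonal entry
    have hlm : l + 1 < m := by have := i.isLt; omega
    have hieq : i = ⟨2*l+1, by have := i.isLt; omega⟩ := Fin.ext (by simp [hl])
    have hlm' : l < m := Nat.lt_of_succ_lt hlm
    have h1 : (Abar m θ) ⟨l+1, hlm⟩ ⟨l, hlm'⟩ = -θ i := by rw [hieq]; exact habarsub θ l hlm
    have h2 : (Abar m θ') ⟨l+1, hlm⟩ ⟨l, hlm'⟩ = -θ' i := by rw [hieq]; exact habarsub θ' l hlm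
    have h3 := hεrel ⟨l+1, hlm⟩ ⟨l, hlm'⟩
    rw [h1, h2] at h3
    have h4 : θ' i = ε ⟨l+1, hlm⟩ * ε ⟨l, hlm'⟩ * θ i := by linarith [h3]
    rw [h4, abs_mul, abs_mul, hεabs, hεabs, one_mul, one_mul]
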